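/- arXiv:1501.02178 — 2 statements merged into one kernel-verified Lean document; each statement's English description precedes it below -/
import Mathlib

section
/- Let μ be an index such that C is disjoint from X_μ and |C ∩ (⋃_{i=0}^{n} X_{μ+i})| ≤ n for all 0 ≤ n ≤ t-1 (indices mod t), where |C| = t-1 and t ≤ k. Then there exists a sequence (p_1, ..., p_{k-|X_μ|}) of nonnegative integers with p_1 ∈ {0,1} and p_i ∈ {p_{i-1}, p_{i-1}+1} such that x^{μ+i}_{p_i} ∉ C for all i; hence the block X_μ ∪ {x^{μ+i}_{p_i}} of 𝔽(k,t) is disjoint from C. -/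
/-- Size of the part `X n` in the construction `𝔽(k,t)`. -/
def Fsize (k t n : ℕ) : ℕ := if n ≤ (t - 1) / 2 then k - t / 2 else k - (t - 1) / 2

/-- The part `X n`, realized as pairs `(n, p)` with `p < |X n|`. -/
def Xpart (k t n : ℕ) : Finset (ℕ × ℕ) := (Finset.range (Fsize k t n)).image (fun p => (n, p))

/-- The slow-growth condition on the sequence `p`: `p 0 = 0` and each step stays or goes up by 1. -/
def slow (p : ℕ → ℕ) : Prop := p 0 = 0 ∧ ∀ m, 1 ≤ m → p m = p (m - 1) ∨ p m = p (m - 1) + 1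

/-- The block of `𝔽(k,t)` determined by the base part `n` and sequence `p`. -/
def Fblock (k t n : ℕ) (p : ℕ → ℕ) : Finset (ℕ × ℕ) :=
  Xpart k t n ∪ (Finset.Icc 1 (k - Fsize k t n)).image (fun i => ((n + i) % t, p i))

/-- The family `𝔽(k,t)`. -/
def Ffam (k t : ℕ) : Set (Finset (ℕ × ℕ)) :=
  {B | ∃ n < t, ∃ p : ℕ → ℕ, slow p ∧ B = Fblock k t n p}

/-- `C` is a blocking set of `𝔽(k,t)`. -/
def IsBlocking (k t : ℕ) (C : Finset (ℕ × ℕ)) : Prop := ∀ B ∈ Ffam k t, (C ∩ B).Nonempty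

/-- The transversal number of `𝔽(k,t)`. -/
noncomputable def tau (k t : ℕ) : ℕ := sInf {m | ∃ C : Finset (ℕ × ℕ), C.card = m ∧ IsBlocking k t C}

/-!
Read `p` as a lattice path through the columns `X_{μ+1}, …, X_{μ+M}` (`M = k - |X_μ|`), moving
one column to the right at each step and staying in its row or going up by one. Let `R_i` be the
set of rows reachable in column `i` by such a path avoiding `C`. From a nonempty `R_i` the rows
`R_i ∪ (R_i + 1)` are offered to column `i + 1`, at least `|R_i| + 1` of them, and each point of
`C` in that column removes at most one. Hence `|R_n| + |C ∩ (X_μ ∪ ⋯ ∪ X_{μ+n})| ≥ n + 1`, so the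
hypothesis keeps every `R_n` nonempty. Since `t ≤ k`, the rows `0, …, i` a path can occupy in
column `i` all lie in `X_{μ+i}`, so only points of `C` inside the parts matter.
-/

lemma slow.extend {p : ℕ → ℕ} (hp : slow p) {i q : ℕ} (hq : q = p i ∨ q = p i + 1) :
    slow (fun m => if m ≤ i then p m else q) := by
  refine ⟨by simp [hp.1], fun m hm => ?_⟩
  by_cases hmi : m ≤ i
  · simpa [hmi, show m - 1 ≤ i by omega] using hp.2 m hm
  · by_cases hm1 : m = i + 1
    · subst hm1
      simpa using hq
    · simp [hmi, show ¬m - 1 ≤ i by omega]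

section SlowPath

variable (blocked : ℕ → ℕ → Prop)

def SlowReachable (n q : ℕ) : Prop :=
  ∃ p, slow p ∧ p n = q ∧ ∀ m, 1 ≤ m → m ≤ n → ¬ blocked m (p m)

lemma slowReachable_zero : SlowReachable blocked 0 0 :=
  ⟨fun _ => 0, ⟨rfl, fun _ _ => Or.inl rfl⟩, rfl, fun _ _ _ => by omega⟩

lemma SlowReachable.succ {blocked} {i q q' : ℕ} (h : SlowReachable blocked i q)
    (hq' : q' = q ∨ q' = q + 1) (hfree : ¬ blocked (i + 1) q') :
    SlowReachable blocked (i + 1) q' := by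
  obtain ⟨p, hp, rfl, havoid⟩ := h
  refine ⟨_, hp.extend hq', by simp, fun m hm1 hm2 => ?_⟩
  by_cases hmi : m ≤ i
  · simpa [hmi] using havoid m hm1 hmi
  · obtain rfl : m = i + 1 := by omega
    simpa using hfree

open Classical in
noncomputable def slowReachableRows (n : ℕ) : Finset ℕ :=
  {q ∈ Finset.range (n + 1) | SlowReachable blocked n q}

lemma mem_slowReachableRows {n q : ℕ} :
    q ∈ slowReachableRows blocked n ↔ q < n + 1 ∧ SlowReachable blocked n q := by
  simp [slowReachableRows]

lemma card_add_one_le_card_union_image_succ {s : Finset ℕ} (hs : s.Nonempty) :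
    s.card + 1 ≤ (s ∪ s.image (· + 1)).card := by
  have hnew : s.max' hs + 1 ∉ s := fun h => by have := s.le_max' _ h; omega
  calc s.card + 1 = (insert (s.max' hs + 1) s).card := (Finset.card_insert_of_notMem hnew).symm
    _ ≤ (s ∪ s.image (· + 1)).card := Finset.card_le_card <| Finset.insert_subset
        (Finset.mem_union_right _ (Finset.mem_image_of_mem _ (s.max'_mem hs)))
        Finset.subset_union_left

variable [DecidableRel blocked]

lemma card_slowReachableRows_succ {i : ℕ} (hi : (slowReachableRows blocked i).Nonempty) :
    (slowReachableRows blocked i).card + 1 ≤ (slowReachableRows blocked (i + 1)).card +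
      {q ∈ Finset.range (i + 1 + 1) | blocked (i + 1) q}.card := by
  set s := slowReachableRows blocked i
  set S := s ∪ s.image (· + 1)
  have hS : S ⊆ Finset.range (i + 1 + 1) := by
    intro q hq
    simp only [S, s, mem_slowReachableRows, Finset.mem_union, Finset.mem_image,
      Finset.mem_range] at hq ⊢
    omega
  have hfree : {q ∈ S | ¬ blocked (i + 1) q} ⊆ slowReachableRows blocked (i + 1) := by
    intro q hq
    simp only [S, s, mem_slowReachableRows, Finset.mem_union, Finset.mem_image,
      Finset.mem_filter] at hq ⊢
    rcases hq with ⟨⟨hq, hr⟩ | ⟨q₀, ⟨hq₀, hr⟩, rfl⟩, hb⟩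
    · exact ⟨by omega, hr.succ (Or.inl rfl) hb⟩
    · exact ⟨by omega, hr.succ (Or.inr rfl) hb⟩
  calc s.card + 1 ≤ S.card := card_add_one_le_card_union_image_succ hi
    _ = {q ∈ S | blocked (i + 1) q}.card + {q ∈ S | ¬ blocked (i + 1) q}.card :=
      (Finset.card_filter_add_card_filter_not _).symm
    _ ≤ {q ∈ Finset.range (i + 1 + 1) | blocked (i + 1) q}.card +
        (slowReachableRows blocked (i + 1)).card :=
      add_le_add (Finset.card_le_card (Finset.filter_subset_filter _ hS))
        (Finset.card_le_card hfree)
    _ = _ := add_comm _ _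

theorem exists_slow_avoiding (N : ℕ)
    (hblocked : ∀ n ≤ N,
      ∑ i ∈ Finset.Icc 1 n, {q ∈ Finset.range (i + 1) | blocked i q}.card ≤ n) :
    ∃ p, slow p ∧ ∀ i, 1 ≤ i → i ≤ N → ¬ blocked i (p i) := by
  have hcount : ∀ n ≤ N, n + 1 ≤ (slowReachableRows blocked n).card +
      ∑ i ∈ Finset.Icc 1 n, {q ∈ Finset.range (i + 1) | blocked i q}.card := by
    intro n
    induction n with
    | zero =>
      intro _
      have : 0 ∈ slowReachableRows blocked 0 :=
        (mem_slowReachableRows blocked).mpr ⟨by omega, slowReachable_zero blocked⟩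
      simpa using Finset.card_pos.mpr ⟨0, this⟩
    | succ i ih =>
      intro hi
      have hne : (slowReachableRows blocked i).Nonempty := by
        have := ih (by omega); have := hblocked i (by omega)
        exact Finset.card_pos.mp (by omega)
      have := card_slowReachableRows_succ blocked hne
      rw [Finset.sum_Icc_succ_top (by omega)]
      omega
  obtain ⟨q, hq⟩ : (slowReachableRows blocked N).Nonempty := by
    have := hcount N le_rfl; have := hblocked N le_rfl
    exact Finset.card_pos.mp (by omega)
  obtain ⟨p, hp, -, havoid⟩ := ((mem_slowReachableRows blocked).mp hq).2
  exact ⟨p, hp, havoid⟩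

end SlowPath

lemma sub_Fsize_le (k t n : ℕ) : k - Fsize k t n ≤ t - 1 := by
  unfold Fsize; split <;> omega

lemma lt_Fsize_add_mod {k t μ i : ℕ} (htk : t ≤ k) (hμ : μ < t) (hi : i ≤ k - Fsize k t μ) :
    i < Fsize k t ((μ + i) % t) := by
  have := sub_Fsize_le k t μ
  have hmod : (μ + i) % t = μ + i ∨ (μ + i) % t = μ + i - t ∧ t ≤ μ + i := by
    rcases lt_or_ge (μ + i) t with h | h
    · exact Or.inl (Nat.mod_eq_of_lt h)
    · exact Or.inr ⟨by rw [Nat.mod_eq_sub_mod h, Nat.mod_eq_of_lt (by omega)], h⟩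
  unfold Fsize at hi ⊢
  split at hi <;> split <;> omega

lemma Xpart_disjoint (k t : ℕ) {n m : ℕ} (hnm : n ≠ m) :
    Disjoint (Xpart k t n) (Xpart k t m) := by
  simp only [Finset.disjoint_left, Xpart, Finset.mem_image, Finset.mem_range]
  rintro _ ⟨a, -, rfl⟩ ⟨b, -, hb⟩
  exact hnm (congrArg Prod.fst hb).symm

lemma injOn_add_mod (t μ : ℕ) : Set.InjOn (fun i => (μ + i) % t) (Finset.range t) :=
  fun _ hi _ hj h => (Nat.ModEq.add_left_cancel' μ h).eq_of_lt_of_lt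
    (Finset.mem_range.mp hi) (Finset.mem_range.mp hj)

lemma card_inter_biUnion_Xpart (k : ℕ) {t : ℕ} (C : Finset (ℕ × ℕ)) (μ : ℕ) {n : ℕ}
    (hn : n < t) :
    (C ∩ (Finset.range (n + 1)).biUnion (fun i => Xpart k t ((μ + i) % t))).card =
      ∑ i ∈ Finset.range (n + 1), (C ∩ Xpart k t ((μ + i) % t)).card := by
  rw [Finset.inter_biUnion, Finset.card_biUnion]
  intro _ hi _ hj hij
  refine (Xpart_disjoint k t fun h => hij ?_).mono
    Finset.inter_subset_right Finset.inter_subset_right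
  exact injOn_add_mod t μ (by simp only [Finset.mem_coe, Finset.mem_range] at hi ⊢; omega)
    (by simp only [Finset.mem_coe, Finset.mem_range] at hj ⊢; omega) h

lemma card_filter_mem_le_card_inter_Xpart {k t c i : ℕ} (C : Finset (ℕ × ℕ))
    (hi : i < Fsize k t c) :
    {q ∈ Finset.range (i + 1) | (c, q) ∈ C}.card ≤ (C ∩ Xpart k t c).card := by
  refine Finset.card_le_card_of_injOn (fun q => (c, q)) (fun q hq => ?_) (fun _ _ _ _ h => ?_)
  · simp only [Finset.coe_filter, Finset.mem_range, Set.mem_ofPred_eq] at hq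
    simp only [Finset.coe_inter, Set.mem_inter_iff, Finset.mem_coe, Xpart, Finset.mem_image,
      Finset.mem_range]
    exact ⟨hq.2, q, by omega, rfl⟩
  · exact congrArg Prod.snd h

lemma sum_card_blocked_le {k t : ℕ} (htk : t ≤ k) {C : Finset (ℕ × ℕ)} {μ : ℕ} (hμ : μ < t)
    (hle : ∀ n ≤ t - 1,
      (C ∩ (Finset.range (n + 1)).biUnion (fun i => Xpart k t ((μ + i) % t))).card ≤ n)
    {n : ℕ} (hn : n ≤ k - Fsize k t μ) :
    ∑ i ∈ Finset.Icc 1 n, {q ∈ Finset.range (i + 1) | ((μ + i) % t, q) ∈ C}.card ≤ n := by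
  have hnt : n ≤ t - 1 := hn.trans (sub_Fsize_le k t μ)
  calc ∑ i ∈ Finset.Icc 1 n, {q ∈ Finset.range (i + 1) | ((μ + i) % t, q) ∈ C}.card
      ≤ ∑ i ∈ Finset.Icc 1 n, (C ∩ Xpart k t ((μ + i) % t)).card :=
        Finset.sum_le_sum fun i hi => card_filter_mem_le_card_inter_Xpart C
          (lt_Fsize_add_mod htk hμ ((Finset.mem_Icc.mp hi).2.trans hn))
    _ ≤ ∑ i ∈ Finset.range (n + 1), (C ∩ Xpart k t ((μ + i) % t)).card :=
        Finset.sum_le_sum_of_subset fun i hi => by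
          simp only [Finset.mem_Icc, Finset.mem_range] at hi ⊢; omega
    _ = _ := (card_inter_biUnion_Xpart k C μ (by omega)).symm
    _ ≤ n := hle n hnt

theorem exists_avoiding_block_general (k t : ℕ) (htk : t ≤ k)
    (C : Finset (ℕ × ℕ))
    (μ : ℕ) (hμ : μ < t)
    (hdisj : Disjoint C (Xpart k t μ))
    (hle : ∀ n ≤ t - 1,
      (C ∩ (Finset.range (n + 1)).biUnion (fun i => Xpart k t ((μ + i) % t))).card ≤ n) :
    ∃ p : ℕ → ℕ, slow p ∧
      (∀ i, 1 ≤ i → i ≤ k - Fsize k t μ → ((μ + i) % t, p i) ∉ C) ∧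
      Disjoint (Fblock k t μ p) C := by
  obtain ⟨p, hp, havoid⟩ := exists_slow_avoiding (fun i q => ((μ + i) % t, q) ∈ C)
    (k - Fsize k t μ) fun n hn => sum_card_blocked_le htk hμ hle hn
  refine ⟨p, hp, havoid, Finset.disjoint_union_left.mpr ⟨hdisj.symm, ?_⟩⟩
  simp only [Finset.disjoint_left, Finset.mem_image, Finset.mem_Icc]
  rintro _ ⟨i, ⟨hi1, hi⟩, rfl⟩
  exact havoid i hi1 hi

/-- Existence of a block of `𝔽(k,t)` avoiding the small set `C`. -/
theorem exists_avoiding_block (k t : ℕ) (ht : 0 < t) (htk : t ≤ k)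
    (C : Finset (ℕ × ℕ)) (hC : C.card = t - 1)
    (μ : ℕ) (hμ : μ < t)
    (hdisj : Disjoint C (Xpart k t μ))
    (hle : ∀ n ≤ t - 1,
      (C ∩ (Finset.range (n + 1)).biUnion (fun i => Xpart k t ((μ + i) % t))).card ≤ n) :
    ∃ p : ℕ → ℕ, slow p ∧
      (∀ i, 1 ≤ i → i ≤ k - Fsize k t μ → ((μ + i) % t, p i) ∉ C) ∧
      Disjoint (Fblock k t μ p) C :=
  exists_avoiding_block_general k t htk C μ hμ hdisj hle
end

section
/- For positive integers k, if there exists a maximal intersecting family of (k-t)-sets 𝒜 with point set disjoint from the point set of 𝔽^⊤(k,t), then 𝔽(k,t) ∪ {A ∪ T : A ∈ 𝒜, T ∈ 𝔽^⊤(k,t)} is an intersecting family of k-sets. -/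
/-- A set blocks the family `G`. -/
def Blocks {α : Type*} [DecidableEq α] (G : Set (Finset α)) (C : Finset α) : Prop :=
  ∀ B ∈ G, (C ∩ B).Nonempty

/-- The family of transversals (minimum-size blocking sets) of `G`. -/
def TrSet {α : Type*} [DecidableEq α] (G : Set (Finset α)) : Set (Finset α) :=
  {C | Blocks G C ∧ ∀ D : Finset α, Blocks G D → C.card ≤ D.card}

lemma slow_le {p : ℕ → ℕ} (hp : slow p) : ∀ i, p i ≤ i := by
  intro i
  induction i with
  | zero => exact le_of_eq hp.1
  | succ n ih =>
    rcases hp.2 (n+1) (by omega) with h | h <;> simp only [Nat.add_sub_cancel] at h <;> omega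

lemma mod_small {a t : ℕ} (ht : 0 < t) (h : a < 2 * t) :
    a % t = if a < t then a else a - t := by
  split_ifs with h'
  · exact Nat.mod_eq_of_lt h'
  · rw [Nat.mod_eq_sub_mod (by omega), Nat.mod_eq_of_lt (by omega)]

lemma tail_le {k t n : ℕ} (htk : t ≤ k) : k - Fsize k t n ≤ t / 2 := by
  unfold Fsize; split_ifs <;> omega

lemma Fsize_le {k t n : ℕ} : Fsize k t n ≤ k := by unfold Fsize; split_ifs <;> omega

lemma Fsize_pos {k t n : ℕ} (ht : 0 < t) (htk : t ≤ k) : 0 < Fsize k t n := by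
  unfold Fsize; split_ifs <;> omega

lemma height_lt {k t n δ : ℕ} (ht : 0 < t) (htk : t ≤ k) (hn : n < t)
    (hδ1 : 1 ≤ δ) (hδ : δ ≤ k - Fsize k t n) (x : ℕ) (hx : x ≤ δ) :
    x < Fsize k t ((n + δ) % t) := by
  have htt : δ ≤ t / 2 := le_trans hδ (tail_le htk)
  have hm : (n + δ) % t = if n + δ < t then n + δ else n + δ - t :=
    mod_small ht (by omega)
  rw [hm]
  unfold Fsize at hδ ⊢
  split_ifs at hδ ⊢ <;> omega

lemma dichotomy {k t n n' : ℕ} (ht : 0 < t) (htk : t ≤ k) (hn : n < t) (hn' : n' < t)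
    (hne : n ≠ n') :
    (if n < n' then n' - n else n' + t - n) ≤ k - Fsize k t n ∨
    (if n' < n then n - n' else n + t - n') ≤ k - Fsize k t n' := by
  unfold Fsize; split_ifs <;> omega

lemma mem_Xpart {k t n : ℕ} {x : ℕ × ℕ} :
    x ∈ Xpart k t n ↔ x.1 = n ∧ x.2 < Fsize k t n := by
  simp only [Xpart, Finset.mem_image, Finset.mem_range]
  constructor
  · rintro ⟨q, hq, rfl⟩; exact ⟨rfl, hq⟩
  · rintro ⟨h1, h2⟩; exact ⟨x.2, h2, by rw [← h1]⟩

lemma block_inter {k t : ℕ} (ht : 0 < t) (htk : t ≤ k) {n n' : ℕ} (hn : n < t) (hn' : n' < t)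
    (hne : n ≠ n') {p p' : ℕ → ℕ} (hp : slow p)
    (hδ : (if n < n' then n' - n else n' + t - n) ≤ k - Fsize k t n) :
    (Fblock k t n p ∩ Fblock k t n' p').Nonempty := by
  set δ := if n < n' then n' - n else n' + t - n with hδdef
  have hδ1 : 1 ≤ δ := by rw [hδdef]; split_ifs <;> omega
  have hmod : (n + δ) % t = n' := by
    rw [hδdef]; split_ifs with h
    · rw [show n + (n' - n) = n' by omega]; exact Nat.mod_eq_of_lt hn'
    · rw [show n + (n' + t - n) = n' + t by omega, Nat.add_mod_right]
      exact Nat.mod_eq_of_lt hn'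
  refine ⟨((n + δ) % t, p δ), Finset.mem_inter.2 ⟨?_, ?_⟩⟩
  · exact Finset.mem_union_right _ (Finset.mem_image.2 ⟨δ, Finset.mem_Icc.2 ⟨hδ1, hδ⟩, rfl⟩)
  · refine Finset.mem_union_left _ (mem_Xpart.2 ⟨by rw [hmod], ?_⟩)
    have := height_lt ht htk hn hδ1 hδ (p δ) (slow_le hp δ)
    rwa [hmod] at this

lemma Ffam_intersecting {k t : ℕ} (ht : 0 < t) (htk : t ≤ k) :
    ∀ B ∈ Ffam k t, ∀ B' ∈ Ffam k t, (B ∩ B').Nonempty := by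
  rintro B ⟨n, hn, p, hp, rfl⟩ B' ⟨n', hn', p', hp', rfl⟩
  by_cases hne : n = n'
  · subst hne
    refine ⟨(n, 0), Finset.mem_inter.2 ⟨?_, ?_⟩⟩ <;>
      exact Finset.mem_union_left _ (mem_Xpart.2 ⟨rfl, Fsize_pos ht htk⟩)
  · rcases dichotomy ht htk hn hn' hne with h | h
    · exact block_inter ht htk hn hn' hne hp h
    · rw [Finset.inter_comm]
      exact block_inter ht htk hn' hn (Ne.symm hne) hp' h

lemma Fblock_card {k t n : ℕ} (ht : 0 < t) (htk : t ≤ k) (hn : n < t) (p : ℕ → ℕ) :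
    (Fblock k t n p).card = k := by
  have htail : k - Fsize k t n ≤ t / 2 := tail_le htk
  have ht2 : t / 2 < t := by omega
  rw [Fblock, Finset.card_union_of_disjoint, Finset.card_image_of_injOn,
      Xpart, Finset.card_image_of_injective, Finset.card_range, Nat.card_Icc]
  · have := Fsize_le (k := k) (t := t) (n := n); omega
  · intro a b hab; simpa using hab
  · intro i hi j hj hij
    simp only [Finset.coe_Icc, Set.mem_Icc] at hi hj
    have h1 : (n + i) % t = (n + j) % t := congrArg Prod.fst hij
    rw [mod_small ht (by omega), mod_small ht (by omega)] at h1
    split_ifs at h1 <;> omega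
  · rw [Finset.disjoint_left]
    rintro x hx hx'
    rw [mem_Xpart] at hx
    rcases Finset.mem_image.1 hx' with ⟨i, hi, rfl⟩
    simp only [Finset.mem_Icc] at hi
    have : (n + i) % t = n := hx.1
    rw [mod_small ht (by omega)] at this
    split_ifs at this <;> omega

lemma blocker_blocks {k t : ℕ} (ht : 0 < t) (htk : t ≤ k) :
    Blocks (Ffam k t) ((Finset.range t).image fun n => (n, 0)) := by
  rintro B ⟨n, hn, p, hp, rfl⟩
  refine ⟨(n, 0), Finset.mem_inter.2 ⟨?_, ?_⟩⟩
  · exact Finset.mem_image.2 ⟨n, Finset.mem_range.2 hn, rfl⟩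
  · exact Finset.mem_union_left _ (mem_Xpart.2 ⟨rfl, Fsize_pos ht htk⟩)

lemma blocker_card {t : ℕ} : ((Finset.range t).image fun n => (n, 0)).card = t := by
  rw [Finset.card_image_of_injective, Finset.card_range]
  intro a b hab; simpa using hab

/-- Reachable heights after `i` steps of a slow walk avoiding columns. -/
def reach (col : ℕ → Finset ℕ) : ℕ → Finset ℕ
  | 0 => {0}
  | (i+1) => ((reach col i) ∪ (reach col i).image (· + 1)) \ col (i+1)

lemma shift_card {S : Finset ℕ} (hS : S.Nonempty) :
    S.card + 1 ≤ (S ∪ S.image (· + 1)).card := by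
  have hmem : S.max' hS + 1 ∈ S ∪ S.image (· + 1) :=
    Finset.mem_union_right _ (Finset.mem_image.2 ⟨S.max' hS, S.max'_mem hS, rfl⟩)
  have hnot : S.max' hS + 1 ∉ S := fun h => by
    have := S.le_max' _ h; omega
  calc S.card + 1 = (insert (S.max' hS + 1) S).card :=
        (Finset.card_insert_of_notMem hnot).symm
    _ ≤ _ := Finset.card_le_card (by
        intro x hx
        rcases Finset.mem_insert.1 hx with rfl | hx
        · exact hmem
        · exact Finset.mem_union_left _ hx)

lemma reach_card (col : ℕ → Finset ℕ) :
    ∀ i, (∀ j ≤ i, ∑ m ∈ Finset.range j, (col (m+1)).card ≤ j) →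
      i + 1 ≤ (reach col i).card + ∑ m ∈ Finset.range i, (col (m+1)).card := by
  intro i
  induction i with
  | zero => intro _; simp [reach]
  | succ i ih =>
    intro H
    have hIH := ih (fun j hj => H j (by omega))
    have hne : (reach col i).Nonempty := by
      rw [← Finset.card_pos]
      have := H i (by omega); omega
    have h1 : (reach col i).card + 1 ≤ (reach col i ∪ (reach col i).image (· + 1)).card :=
      shift_card hne
    have h2 : (reach col i ∪ (reach col i).image (· + 1)).card ≤
        (reach col (i+1)).card + (col (i+1)).card := by
      have : reach col i ∪ (reach col i).image (· + 1) ⊆ reach col (i+1) ∪ col (i+1) := by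
        intro x hx
        by_cases hc : x ∈ col (i+1)
        · exact Finset.mem_union_right _ hc
        · exact Finset.mem_union_left _ (Finset.mem_sdiff.2 ⟨hx, hc⟩)
      calc _ ≤ (reach col (i+1) ∪ col (i+1)).card := Finset.card_le_card this
        _ ≤ _ := Finset.card_union_le _ _
    rw [Finset.sum_range_succ]
    omega

lemma reach_path (col : ℕ → Finset ℕ) :
    ∀ i, ∀ x ∈ reach col i, ∃ p : ℕ → ℕ, slow p ∧ p i = x ∧
      ∀ j, 1 ≤ j → j ≤ i → p j ∉ col j := by
  intro i
  induction i with
  | zero =>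
    intro x hx
    simp only [reach, Finset.mem_singleton] at hx
    exact ⟨fun _ => 0, ⟨rfl, fun m _ => Or.inl rfl⟩, hx.symm, fun j h1 h2 => by omega⟩
  | succ i ih =>
    intro x hx
    rw [reach, Finset.mem_sdiff] at hx
    obtain ⟨hx1, hx2⟩ := hx
    have key : ∃ y ∈ reach col i, y = x ∨ y + 1 = x := by
      rcases Finset.mem_union.1 hx1 with h | h
      · exact ⟨x, h, Or.inl rfl⟩
      · rcases Finset.mem_image.1 h with ⟨y, hy, hyx⟩
        exact ⟨y, hy, Or.inr hyx⟩
    obtain ⟨y, hy, hyx⟩ := key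
    obtain ⟨p, hp, hpi, havoid⟩ := ih y hy
    refine ⟨fun m => if m ≤ i then p m else x, ⟨by simp [hp.1], ?_⟩, by simp, ?_⟩
    · intro m hm
      by_cases h1 : m ≤ i
      · have h2 : m - 1 ≤ i := by omega
        simp only [h1, h2, if_true]
        exact hp.2 m hm
      · by_cases h2 : m = i + 1
        · subst h2
          simp only [Nat.add_sub_cancel, if_neg (by omega : ¬ i + 1 ≤ i), if_pos le_rfl, hpi]
          rcases hyx with rfl | h
          · exact Or.inl rfl
          · exact Or.inr h.symm
        · have h3 : ¬ m - 1 ≤ i := by omega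
          simp only []
          rw [if_neg h1, if_neg h3]
          exact Or.inl rfl
    · intro j hj1 hj2
      by_cases h1 : j ≤ i
      · simpa [h1] using havoid j hj1 h1
      · have : j = i + 1 := by omega
        subst this
        simpa using hx2

lemma blocks_card_ge {k t : ℕ} (ht : 0 < t) (htk : t ≤ k) (C : Finset (ℕ × ℕ))
    (hC : Blocks (Ffam k t) C) : t ≤ C.card := by
  by_contra hlt
  push_neg at hlt
  set d : ℕ → ℕ := fun m => (C.filter fun x => x.1 % t = m % t).card with hd
  have hdper : ∀ m, d (m + t) = d m := by
    intro m; simp only [hd, Nat.add_mod_right]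
  have hsum : ∑ m ∈ Finset.range t, d m = C.card := by
    rw [hd]
    rw [Finset.card_eq_sum_card_fiberwise
      (f := fun x : ℕ × ℕ => x.1 % t) (t := Finset.range t)
      (fun x _ => Finset.mem_range.2 (Nat.mod_lt _ ht))]
    refine Finset.sum_congr rfl fun m hm => ?_
    rw [Finset.mem_range] at hm
    apply congrArg Finset.card
    ext x
    simp [Nat.mod_eq_of_lt hm, eq_comm]
  set S : ℕ → ℤ := fun i => ∑ j ∈ Finset.range i, ((d j : ℤ) - 1) with hS
  have hSstep : ∀ i, S (i+1) = S i + (d i : ℤ) - 1 := by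
    intro i; simp only [hS, Finset.sum_range_succ]; ring
  have hSper : ∀ i, S (i + t) = S i + S t := by
    intro i
    induction i with
    | zero => simp [hS]
    | succ i ih =>
      have h1 := hSstep (i + t)
      rw [show i + 1 + t = (i + t) + 1 by ring, h1, ih, hdper, hSstep]
      ring
  have hSt : S t ≤ -1 := by
    have h1 : S t = (∑ m ∈ Finset.range t, (d m : ℤ)) - t := by
      simp [hS, Finset.sum_sub_distrib]
    have h2 : (∑ m ∈ Finset.range t, (d m : ℤ)) = (C.card : ℤ) := by
      rw [← hsum]; push_cast; ring
    rw [h1, h2]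
    have : (C.card : ℤ) < t := by exact_mod_cast hlt
    omega
  obtain ⟨n, hn, hmax⟩ := Finset.exists_max_image (Finset.range t)
    (fun m => 2 * (t : ℤ) * S m + m) ⟨0, Finset.mem_range.2 ht⟩
  rw [Finset.mem_range] at hn
  have hSn : ∀ m < t, S m ≤ S n := by
    intro m hm
    by_contra h
    push_neg at h
    have := hmax m (Finset.mem_range.2 hm)
    have h' : S n + 1 ≤ S m := by omega
    nlinarith [this, h']
  have hlast : ∀ m < t, n < m → S m < S n := by
    intro m hm hnm
    rcases lt_or_eq_of_le (hSn m hm) with h | h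
    · exact h
    · exfalso
      have := hmax m (Finset.mem_range.2 hm)
      simp only [h] at this
      omega
  have hkey : ∀ i, 1 ≤ i → i ≤ t → S (n + i) < S n := by
    intro i hi1 hi2
    by_cases h : n + i < t
    · exact hlast (n + i) h (by omega)
    · have h1 : n + i - t < t := by omega
      have h2 : n + i = (n + i - t) + t := by omega
      rw [h2, hSper]
      have h3 : S (n + i - t) ≤ S n := hSn _ h1
      omega
  have hdn : d n = 0 := by
    have h1 := hkey 1 le_rfl ht
    rw [hSstep] at h1
    have : (d n : ℤ) < 1 := by omega
    exact_mod_cast by omega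
  have hchunk : ∀ b, S (n + b) - S n = ∑ m ∈ Finset.range b, ((d (n + m) : ℤ) - 1) := by
    intro b
    induction b with
    | zero => simp
    | succ b ih =>
      rw [show n + (b + 1) = (n + b) + 1 by ring, hSstep, Finset.sum_range_succ]
      omega
  have hpre : ∀ j, j + 1 ≤ t → ∑ m ∈ Finset.range (j+1), d (n + m) ≤ j := by
    intro j hj
    have h1 := hkey (j+1) (by omega) hj
    have h2 := hchunk (j+1)
    have h3 : ∑ m ∈ Finset.range (j+1), ((d (n + m) : ℤ) - 1) < 0 := by linarith
    rw [Finset.sum_sub_distrib] at h3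
    simp only [Finset.sum_const, Finset.card_range, nsmul_eq_mul, mul_one] at h3
    have h4 : ((∑ m ∈ Finset.range (j+1), d (n + m) : ℕ) : ℤ) < ((j : ℤ) + 1) := by
      push_cast at h3 ⊢
      linarith
    have h5 : ∑ m ∈ Finset.range (j+1), d (n + m) < j + 1 := by exact_mod_cast h4
    omega
  -- columns relative to base n
  set col : ℕ → Finset ℕ :=
    fun i => (C.filter fun x => x.1 = (n + i) % t).image Prod.snd with hcol
  have hcolcard : ∀ i, (col i).card ≤ d (n + i) := by
    intro i
    refine le_trans Finset.card_image_le (Finset.card_le_card ?_)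
    intro x hx
    rw [Finset.mem_filter] at hx ⊢
    refine ⟨hx.1, ?_⟩
    rw [hx.2]
    exact Nat.mod_eq_of_lt (Nat.mod_lt _ ht)
  set s := k - Fsize k t n with hsdef
  have hs : s + 1 ≤ t := by
    have := tail_le (n := n) htk; omega
  have hprefix : ∀ j ≤ s, ∑ m ∈ Finset.range j, (col (m+1)).card ≤ j := by
    intro j hj
    calc ∑ m ∈ Finset.range j, (col (m+1)).card
        ≤ ∑ m ∈ Finset.range j, d (n + (m+1)) :=
          Finset.sum_le_sum fun m _ => hcolcard (m+1)
      _ ≤ j := by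
          have h1 := hpre j (by omega)
          rw [Finset.sum_range_succ'] at h1
          simp only [show n + 0 = n from rfl, hdn, add_zero] at h1
          calc ∑ m ∈ Finset.range j, d (n + (m+1))
              = ∑ m ∈ Finset.range j, d (n + m + 1) := by
                refine Finset.sum_congr rfl fun m _ => by ring_nf
            _ ≤ j := h1
  have hne : (reach col s).Nonempty := by
    rw [← Finset.card_pos]
    have h1 := reach_card col s hprefix
    have h2 := hprefix s le_rfl
    omega
  obtain ⟨x, hx⟩ := hne
  obtain ⟨p, hp, hpx, havoid⟩ := reach_path col s x hx
  obtain ⟨y, hy⟩ := hC (Fblock k t n p) ⟨n, hn, p, hp, rfl⟩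
  rw [Finset.mem_inter] at hy
  obtain ⟨hyC, hyB⟩ := hy
  rcases Finset.mem_union.1 hyB with h | h
  · rw [mem_Xpart] at h
    have : y ∈ C.filter fun x => x.1 % t = n % t := by
      rw [Finset.mem_filter]
      exact ⟨hyC, by rw [h.1]⟩
    have : 0 < d n := Finset.card_pos.2 ⟨y, this⟩
    omega
  · rcases Finset.mem_image.1 h with ⟨i, hi, hiy⟩
    rw [Finset.mem_Icc] at hi
    refine havoid i hi.1 (by rw [hsdef]; exact hi.2) ?_
    rw [hcol]
    refine Finset.mem_image.2 ⟨y, Finset.mem_filter.2 ⟨hyC, ?_⟩, ?_⟩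
    · rw [← hiy]
    · rw [← hiy]

lemma trset_card {k t : ℕ} (ht : 0 < t) (htk : t ≤ k) {T : Finset (ℕ × ℕ)}
    (hT : T ∈ TrSet (Ffam k t)) : T.card = t := by
  have h1 : t ≤ T.card := blocks_card_ge ht htk T hT.1
  have h2 : T.card ≤ t := by
    have := hT.2 _ (blocker_blocks ht htk)
    rwa [blocker_card] at this
  omega


/-- Gluing a maximal intersecting family of `(k-t)`-sets onto the transversals of `𝔽(k,t)`
yields, together with `𝔽(k,t)`, an intersecting family of `k`-sets. -/
theorem glued_family_intersecting (k t : ℕ) (ht : 0 < t) (htk : t ≤ k)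
    (𝒜 : Set (Finset (ℕ × ℕ)))
    (h𝒜unif : ∀ A ∈ 𝒜, A.card = k - t)
    (h𝒜max : 𝒜 = TrSet 𝒜)
    (hpts : (⋃ A ∈ 𝒜, (A : Set (ℕ × ℕ))) ∩ (⋃ T ∈ TrSet (Ffam k t), (T : Set (ℕ × ℕ))) = ∅) :
    (∀ B ∈ Ffam k t ∪ {B | ∃ A ∈ 𝒜, ∃ T ∈ TrSet (Ffam k t), B = A ∪ T},
      ∀ B' ∈ Ffam k t ∪ {B | ∃ A ∈ 𝒜, ∃ T ∈ TrSet (Ffam k t), B = A ∪ T},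
        (B ∩ B').Nonempty) ∧
    (∀ B ∈ Ffam k t ∪ {B | ∃ A ∈ 𝒜, ∃ T ∈ TrSet (Ffam k t), B = A ∪ T}, B.card = k) := by
  constructor
  · rintro B (hB | ⟨A, hA, T, hT, rfl⟩) B' (hB' | ⟨A', hA', T', hT', rfl⟩)
    · exact Ffam_intersecting ht htk B hB B' hB'
    · -- B ∈ Ffam, B' = A' ∪ T'
      obtain ⟨x, hx⟩ := hT'.1 B hB
      rw [Finset.mem_inter] at hx
      exact ⟨x, Finset.mem_inter.2 ⟨hx.2, Finset.mem_union_right _ hx.1⟩⟩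
    · obtain ⟨x, hx⟩ := hT.1 B' hB'
      rw [Finset.mem_inter] at hx
      exact ⟨x, Finset.mem_inter.2 ⟨Finset.mem_union_right _ hx.1, hx.2⟩⟩
    · -- both glued
      have hA2 : A ∈ TrSet 𝒜 := h𝒜max ▸ hA
      obtain ⟨x, hx⟩ := hA2.1 A' hA'
      rw [Finset.mem_inter] at hx
      exact ⟨x, Finset.mem_inter.2
        ⟨Finset.mem_union_left _ hx.1, Finset.mem_union_left _ hx.2⟩⟩
  · rintro B (hB | ⟨A, hA, T, hT, rfl⟩)
    · obtain ⟨n, hn, p, hp, rfl⟩ := hB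
      exact Fblock_card ht htk hn p
    · have hdisj : Disjoint A T := by
        rw [Finset.disjoint_left]
        intro x hxA hxT
        have hx1 : (x : ℕ × ℕ) ∈ (⋃ A ∈ 𝒜, (A : Set (ℕ × ℕ))) :=
          Set.mem_biUnion hA hxA
        have hx2 : (x : ℕ × ℕ) ∈ (⋃ T ∈ TrSet (Ffam k t), (T : Set (ℕ × ℕ))) :=
          Set.mem_biUnion hT hxT
        have : (x : ℕ × ℕ) ∈ (∅ : Set (ℕ × ℕ)) := hpts ▸ ⟨hx1, hx2⟩
        exact this
      rw [Finset.card_union_of_disjoint hdisj, h𝒜unif A hA, trset_card ht htk hT]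
      omega
end
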